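/- arXiv:1005.2474 — 2 statements merged into one kernel-verified Lean document; each statement's English description precedes it below -/
import Mathlib

section
/- Let ρ : [0,∞) → [0,∞) be an Osgood modulus, let T > 0, let β : [0,T] → [0,∞) be Lebesgue integrable, and let X : [0,T] → [0,∞) be a bounded measurable function satisfying X(t) ≤ ∫_t^T β(s) ρ(X(s)) ds for every t ∈ [0,T]. Then X(t) = 0 for every t ∈ [0,T]. -/
open MeasureTheory Set

/-- An Osgood modulus: `ρ : [0,∞) → [0,∞)` continuous, nondecreasing, concave,
`ρ(0) = 0`, `ρ(u) > 0` for `u > 0`, and `∫₀¹ du/ρ(u) = +∞`. -/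
def IsOsgoodModulus (ρ : ℝ → ℝ) : Prop :=
  ContinuousOn ρ (Ici 0) ∧ MonotoneOn ρ (Ici 0) ∧ ConcaveOn ℝ (Ici 0) ρ ∧
  ρ 0 = 0 ∧ (∀ u : ℝ, 0 < u → 0 < ρ u) ∧
  ∫⁻ u in Ioc (0:ℝ) 1, ENNReal.ofReal (1 / ρ u) = ⊤

/-!
Let `F t = ∫_t^T β ρ(X)`: it is continuous and nonincreasing, `F T = 0` and `X ≤ F`. If
`F t₀ = c > 0`, the intermediate value theorem gives times `t₀ ≤ s₀ < s₁ < ⋯ ≤ T` with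
`F sₖ = c / 2^k`. On `[sₖ, sₖ₊₁]` we have `X ≤ F ≤ c / 2^k`, so
`c / 2^(k+1) = F sₖ - F sₖ₊₁ ≤ ρ(c / 2^k) ∫_{sₖ}^{sₖ₊₁} β`, and summing,
`∑ₖ (c / 2^k) / ρ(c / 2^k) ≤ 2 ∫₀^T β < ∞`. But bounding `1 / ρ` on each dyadic piece
`(c / 2^(k+1), c / 2^k]` by `1 / ρ(c / 2^(k+1))` shows that `∫₀^c du / ρ(u)` is at most that
series, contradicting the Osgood condition.
-/

section Osgood

variable {ρ : ℝ → ℝ}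

lemma setLIntegral_Ioc_inv_le (hmono : MonotoneOn ρ (Ioi 0)) (hpos : ∀ u, 0 < u → 0 < ρ u)
    {x : ℝ} (hx : 0 < x) (y : ℝ) :
    ∫⁻ u in Ioc x y, ENNReal.ofReal (1 / ρ u) ≤ ENNReal.ofReal ((y - x) / ρ x) :=
  calc ∫⁻ u in Ioc x y, ENNReal.ofReal (1 / ρ u)
      ≤ ∫⁻ _ in Ioc x y, ENNReal.ofReal (1 / ρ x) :=
        setLIntegral_mono measurable_const fun u hu => ENNReal.ofReal_le_ofReal <|
          one_div_le_one_div_of_le (hpos x hx) (hmono hx (hx.trans hu.1) hu.1.le)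
    _ = ENNReal.ofReal ((y - x) / ρ x) := by
        rw [setLIntegral_const, Real.volume_Ioc,
          ← ENNReal.ofReal_mul (one_div_nonneg.2 (hpos x hx).le), one_div_mul_eq_div]

lemma lintegral_Ioc_zero_inv_eq_top (hmono : MonotoneOn ρ (Ioi 0))
    (hpos : ∀ u, 0 < u → 0 < ρ u) (hint : ∫⁻ u in Ioc (0:ℝ) 1, ENNReal.ofReal (1 / ρ u) = ⊤)
    {c : ℝ} (hc : 0 < c) :
    ∫⁻ u in Ioc 0 c, ENNReal.ofReal (1 / ρ u) = ⊤ := by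
  have htail : ∫⁻ u in Ioc c 1, ENNReal.ofReal (1 / ρ u) ≠ ⊤ :=
    ne_top_of_le_ne_top ENNReal.ofReal_ne_top (setLIntegral_Ioc_inv_le hmono hpos hc 1)
  have hsplit : ⊤ ≤ (∫⁻ u in Ioc 0 c, ENNReal.ofReal (1 / ρ u))
      + ∫⁻ u in Ioc c 1, ENNReal.ofReal (1 / ρ u) := by
    rw [← hint]
    exact (lintegral_mono_set Ioc_subset_Ioc_union_Ioc).trans (lintegral_union_le _ _ _)
  exact (ENNReal.add_eq_top.1 (top_le_iff.1 hsplit)).resolve_right htail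

lemma Ioc_zero_subset_iUnion_Ioc_div_two_pow (c : ℝ) :
    Ioc 0 c ⊆ ⋃ n : ℕ, Ioc (c / 2 ^ (n + 1)) (c / 2 ^ n) := by
  rintro u ⟨hu, huc⟩
  obtain ⟨n, hn, hn'⟩ := exists_nat_pow_near ((one_le_div hu).2 huc) one_lt_two
  rw [le_div_iff₀ hu] at hn
  rw [div_lt_iff₀ hu] at hn'
  refine mem_iUnion.2 ⟨n, ?_, ?_⟩
  · rw [div_lt_iff₀ (by positivity)]
    linarith
  · rw [le_div_iff₀ (by positivity)]
    linarith

theorem not_summable_dyadic_of_lintegral_inv_eq_top (hmono : MonotoneOn ρ (Ioi 0))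
    (hpos : ∀ u, 0 < u → 0 < ρ u) (hint : ∫⁻ u in Ioc (0:ℝ) 1, ENNReal.ofReal (1 / ρ u) = ⊤)
    {c : ℝ} (hc : 0 < c) :
    ¬ Summable fun k : ℕ => c / 2 ^ k / ρ (c / 2 ^ k) := by
  intro hsum
  have hnonneg : ∀ n : ℕ, 0 ≤ c / 2 ^ (n + 1) / ρ (c / 2 ^ (n + 1)) := fun n =>
    (div_pos (by positivity) (hpos _ (by positivity))).le
  have hpiece : ∀ n : ℕ, ∫⁻ u in Ioc (c / 2 ^ (n + 1)) (c / 2 ^ n), ENNReal.ofReal (1 / ρ u)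
      ≤ ENNReal.ofReal (c / 2 ^ (n + 1) / ρ (c / 2 ^ (n + 1))) := fun n => by
    have h := setLIntegral_Ioc_inv_le hmono hpos (x := c / 2 ^ (n + 1)) (by positivity) (c / 2 ^ n)
    rwa [show c / 2 ^ n - c / 2 ^ (n + 1) = c / 2 ^ (n + 1) by ring] at h
  refine ENNReal.ofReal_ne_top (r := ∑' n : ℕ, c / 2 ^ (n + 1) / ρ (c / 2 ^ (n + 1)))
    (top_le_iff.1 ?_)
  calc ⊤ = ∫⁻ u in Ioc 0 c, ENNReal.ofReal (1 / ρ u) :=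
        (lintegral_Ioc_zero_inv_eq_top hmono hpos hint hc).symm
    _ ≤ ∫⁻ u in ⋃ n : ℕ, Ioc (c / 2 ^ (n + 1)) (c / 2 ^ n), ENNReal.ofReal (1 / ρ u) :=
        lintegral_mono_set (Ioc_zero_subset_iUnion_Ioc_div_two_pow c)
    _ ≤ ∑' n : ℕ, ∫⁻ u in Ioc (c / 2 ^ (n + 1)) (c / 2 ^ n), ENNReal.ofReal (1 / ρ u) :=
        lintegral_iUnion_le _ _
    _ ≤ ∑' n : ℕ, ENNReal.ofReal (c / 2 ^ (n + 1) / ρ (c / 2 ^ (n + 1))) :=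
        ENNReal.tsum_le_tsum hpiece
    _ = _ := (ENNReal.ofReal_tsum_of_nonneg hnonneg ((summable_nat_add_iff 1).2 hsum)).symm

end Osgood

lemma exists_seq_mem_Icc_eq_div_two_pow {F : ℝ → ℝ} {a b : ℝ} (hab : a ≤ b)
    (hF : ContinuousOn F (Icc a b)) (hFb : F b ≤ 0) (hFa : 0 ≤ F a) :
    ∃ t : ℕ → ℝ, ∀ n, t n ∈ Icc a b ∧ F (t n) = F a / 2 ^ n := by
  have h : ∀ n : ℕ, F a / 2 ^ n ∈ F '' Icc a b := fun n =>
    intermediate_value_Icc' hab hF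
      ⟨hFb.trans (by positivity), div_le_self hFa (one_le_pow₀ one_le_two)⟩
  choose t ht using h
  exact ⟨t, ht⟩

lemma integrableOn_mul_comp_of_mem_Icc {ρ β X : ℝ → ℝ} {s : Set ℝ} {B : ℝ}
    (hs : MeasurableSet s) (hρ : MonotoneOn ρ (Ici 0)) (hβ : IntegrableOn β s)
    (hX : Measurable X) (hXs : ∀ t ∈ s, X t ∈ Icc 0 B) :
    IntegrableOn (fun t => β t * ρ (X t)) s := by
  have hρ' : Monotone fun u => ρ (max u 0) := fun u v huv =>
    hρ (le_max_right u 0) (le_max_right v 0) (max_le_max huv le_rfl)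
  have heq : EqOn (fun t => β t * ρ (max (X t) 0)) (fun t => β t * ρ (X t)) s := fun t ht => by
    simp only [max_eq_left (hXs t ht).1]
  refine IntegrableOn.congr_fun (Integrable.mul_bdd (c := max |ρ 0| |ρ B|) hβ
    (hρ'.measurable.comp hX).aestronglyMeasurable ?_) heq hs
  refine (ae_restrict_iff' hs).2 (Filter.Eventually.of_forall fun t ht => ?_)
  obtain ⟨hX0, hXB⟩ := hXs t ht
  rw [Function.comp_apply, max_eq_left hX0, Real.norm_eq_abs]
  exact abs_le_max_abs_abs (hρ self_mem_Ici hX0 hX0) (hρ hX0 (hX0.trans hXB) hXB)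

section Backward

variable {ρ β g : ℝ → ℝ} {a b : ℝ}

lemma MeasureTheory.IntegrableOn.intervalIntegrable_of_mem_Icc (hg : IntegrableOn g (Icc a b))
    {s s' : ℝ} (hs : s ∈ Icc a b) (hs' : s' ∈ Icc a b) : IntervalIntegrable g volume s s' :=
  (hg.mono_set (uIcc_subset_Icc hs hs')).intervalIntegrable

lemma antitoneOn_integral_of_nonneg (hg : IntegrableOn g (Icc a b))
    (hgnonneg : ∀ s ∈ Icc a b, 0 ≤ g s) :
    AntitoneOn (fun t => ∫ u in t..b, g u) (Icc a b) := fun _ hs _ hs' hss' =>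
  intervalIntegral.integral_mono_interval hss' hs'.2 le_rfl
    ((ae_restrict_iff' measurableSet_Ioc).2 <|
      Filter.Eventually.of_forall fun u hu => hgnonneg u ⟨hs.1.trans hu.1.le, hu.2⟩)
    (hg.intervalIntegrable_of_mem_Icc hs ⟨hs.1.trans hs.2, le_rfl⟩)

lemma exists_dyadic_times (hab : a ≤ b) (hρ : MonotoneOn ρ (Ioi 0))
    (hβ : IntegrableOn β (Icc a b)) (hβnonneg : ∀ s ∈ Icc a b, 0 ≤ β s)
    (hg : IntegrableOn g (Icc a b)) (hgnonneg : ∀ s ∈ Icc a b, 0 ≤ g s)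
    (hgle : ∀ s ∈ Icc a b, g s ≤ β s * ρ (∫ u in s..b, g u))
    {c : ℝ} (hc : ∫ u in a..b, g u = c) (hc0 : 0 < c) :
    ∃ t : ℕ → ℝ, Monotone t ∧ (∀ n, t n ∈ Icc a b) ∧
      ∀ k, c / 2 ^ (k + 1) ≤ ρ (c / 2 ^ k) * ∫ u in t k..t (k + 1), β u := by
  set F : ℝ → ℝ := fun t => ∫ u in t..b, g u
  have hanti : AntitoneOn F (Icc a b) := antitoneOn_integral_of_nonneg hg hgnonneg
  have hcont : ContinuousOn F (Icc a b) := by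
    have h := intervalIntegral.continuousOn_primitive_interval_left (μ := volume)
      (by rwa [uIcc_of_le hab] : IntegrableOn g (uIcc a b))
    rwa [uIcc_of_le hab] at h
  have hFa : F a = c := hc
  obtain ⟨t, ht⟩ := exists_seq_mem_Icc_eq_div_two_pow hab hcont
    intervalIntegral.integral_same.le (hFa ▸ hc0.le)
  have hFt : ∀ n, F (t n) = c / 2 ^ n := fun n => hFa ▸ (ht n).2
  have hdecr : ∀ n, c / 2 ^ (n + 1) < c / 2 ^ n := fun n =>
    div_lt_div_of_pos_left hc0 (by positivity) (pow_lt_pow_right₀ one_lt_two n.lt_succ_self)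
  have hmono : Monotone t := monotone_nat_of_le_succ fun n =>
    (hanti.reflect_lt (ht (n + 1)).1 (ht n).1 (by rw [hFt, hFt]; exact hdecr n)).le
  refine ⟨t, hmono, fun n => (ht n).1, fun k => ?_⟩
  have hmem : ∀ u ∈ Icc (t k) (t (k + 1)), u ∈ Icc a b := fun u hu =>
    ⟨(ht k).1.1.trans hu.1, hu.2.trans (ht (k + 1)).1.2⟩
  have hbound : ∀ u ∈ Icc (t k) (t (k + 1)), g u ≤ ρ (c / 2 ^ k) * β u := fun u hu => by
    have hFu : F u ≤ c / 2 ^ k := hFt k ▸ hanti (ht k).1 (hmem u hu) hu.1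
    have hFu0 : 0 < F u := (by positivity : (0:ℝ) < c / 2 ^ (k + 1)).trans_le <|
      hFt (k + 1) ▸ hanti (hmem u hu) (ht (k + 1)).1 hu.2
    calc g u ≤ β u * ρ (F u) := hgle u (hmem u hu)
      _ ≤ β u * ρ (c / 2 ^ k) :=
        mul_le_mul_of_nonneg_left (hρ hFu0 (hFu0.trans_le hFu) hFu) (hβnonneg u (hmem u hu))
      _ = ρ (c / 2 ^ k) * β u := mul_comm _ _
  have hgi := hg.intervalIntegrable_of_mem_Icc (ht k).1 (ht (k + 1)).1
  calc c / 2 ^ (k + 1) = F (t k) - F (t (k + 1)) := by rw [hFt, hFt]; ring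
    _ = ∫ u in t k..t (k + 1), g u := (eq_sub_of_add_eq
        (intervalIntegral.integral_add_adjacent_intervals hgi
          (hg.intervalIntegrable_of_mem_Icc (ht (k + 1)).1 ⟨hab, le_rfl⟩))).symm
    _ ≤ ∫ u in t k..t (k + 1), ρ (c / 2 ^ k) * β u :=
        intervalIntegral.integral_mono_on (hmono k.le_succ) hgi
          ((hβ.intervalIntegrable_of_mem_Icc (ht k).1 (ht (k + 1)).1).const_mul _) hbound
    _ = ρ (c / 2 ^ k) * ∫ u in t k..t (k + 1), β u := intervalIntegral.integral_const_mul _ _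

theorem summable_dyadic_of_le_mul_comp_integral (hab : a ≤ b) (hρ : MonotoneOn ρ (Ioi 0))
    (hρpos : ∀ u, 0 < u → 0 < ρ u)
    (hβ : IntegrableOn β (Icc a b)) (hβnonneg : ∀ s ∈ Icc a b, 0 ≤ β s)
    (hg : IntegrableOn g (Icc a b)) (hgnonneg : ∀ s ∈ Icc a b, 0 ≤ g s)
    (hgle : ∀ s ∈ Icc a b, g s ≤ β s * ρ (∫ u in s..b, g u))
    {c : ℝ} (hc : ∫ u in a..b, g u = c) (hc0 : 0 < c) :
    Summable fun k : ℕ => c / 2 ^ k / ρ (c / 2 ^ k) := by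
  obtain ⟨t, hmono, hmem, hstep⟩ :=
    exists_dyadic_times hab hρ hβ hβnonneg hg hgnonneg hgle hc hc0
  have hρk : ∀ k : ℕ, 0 < ρ (c / 2 ^ k) := fun k => hρpos _ (by positivity)
  refine summable_of_sum_range_le (c := 2 * ∫ u in a..b, β u)
    (fun k => (div_pos (by positivity) (hρk k)).le) fun n => ?_
  calc ∑ k ∈ Finset.range n, c / 2 ^ k / ρ (c / 2 ^ k)
      ≤ ∑ k ∈ Finset.range n, 2 * ∫ u in t k..t (k + 1), β u :=
        Finset.sum_le_sum fun k _ => by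
          rw [div_le_iff₀ (hρk k)]
          linear_combination 2 * hstep k
    _ = 2 * ∫ u in t 0..t n, β u := by
        rw [← Finset.mul_sum, intervalIntegral.sum_integral_adjacent_intervals fun k _ =>
          hβ.intervalIntegrable_of_mem_Icc (hmem k) (hmem (k + 1))]
    _ ≤ 2 * ∫ u in a..b, β u := by
        gcongr
        exact intervalIntegral.integral_mono_interval (hmem 0).1 (hmono n.zero_le) (hmem n).2
          ((ae_restrict_iff' measurableSet_Ioc).2 <|
            Filter.Eventually.of_forall fun u hu => hβnonneg u (Ioc_subset_Icc_self hu))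
          (hβ.intervalIntegrable_of_mem_Icc ⟨le_rfl, hab⟩ ⟨hab, le_rfl⟩)

end Backward

theorem backward_bihari_osgood_general
    (ρ : ℝ → ℝ) (hρ : IsOsgoodModulus ρ)
    (T : ℝ)
    (β : ℝ → ℝ) (hβint : IntegrableOn β (Icc 0 T))
    (hβnonneg : ∀ t ∈ Icc (0:ℝ) T, 0 ≤ β t)
    (X : ℝ → ℝ) (hXmeas : Measurable X)
    (B : ℝ) (hXbdd : ∀ t ∈ Icc (0:ℝ) T, X t ∈ Icc 0 B)
    (hX : ∀ t ∈ Icc (0:ℝ) T, X t ≤ ∫ s in t..T, β s * ρ (X s)) :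
    ∀ t ∈ Icc (0:ℝ) T, X t = 0 := by
  obtain ⟨-, hmono, -, hρ0, hpos, hint⟩ := hρ
  have hmono' : MonotoneOn ρ (Ioi 0) := hmono.mono Ioi_subset_Ici_self
  have hg := integrableOn_mul_comp_of_mem_Icc measurableSet_Icc hmono hβint hXmeas hXbdd
  intro t ht
  refine le_antisymm (not_lt.1 fun hXt => ?_) (hXbdd t ht).1
  have hsub : Icc t T ⊆ Icc 0 T := Icc_subset_Icc_left ht.1
  have hgnonneg : ∀ s ∈ Icc t T, 0 ≤ β s * ρ (X s) := fun s hs =>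
    have hX0 := (hXbdd s (hsub hs)).1
    mul_nonneg (hβnonneg s (hsub hs)) (hρ0 ▸ hmono self_mem_Ici hX0 hX0)
  have hgle : ∀ s ∈ Icc t T, β s * ρ (X s) ≤ β s * ρ (∫ u in s..T, β u * ρ (X u)) :=
    fun s hs => mul_le_mul_of_nonneg_left (hmono (hXbdd s (hsub hs)).1
      ((hXbdd s (hsub hs)).1.trans (hX s (hsub hs))) (hX s (hsub hs))) (hβnonneg s (hsub hs))
  have hc : 0 < ∫ s in t..T, β s * ρ (X s) := hXt.trans_le (hX t ht)
  exact not_summable_dyadic_of_lintegral_inv_eq_top hmono' hpos hint hc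
    (summable_dyadic_of_le_mul_comp_integral ht.2 hmono' hpos (hβint.mono_set hsub)
      (fun s hs => hβnonneg s (hsub hs)) (hg.mono_set hsub) hgnonneg hgle rfl hc)

/-- Backward Bihari–LaSalle inequality with an Osgood modulus forces the
function to vanish. -/
theorem backward_bihari_osgood
    (ρ : ℝ → ℝ) (hρ : IsOsgoodModulus ρ)
    (T : ℝ) (hT : 0 < T)
    (β : ℝ → ℝ) (hβint : IntegrableOn β (Icc 0 T))
    (hβnonneg : ∀ t ∈ Icc (0:ℝ) T, 0 ≤ β t)
    (X : ℝ → ℝ) (hXmeas : Measurable X)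
    (B : ℝ) (hXbdd : ∀ t ∈ Icc (0:ℝ) T, X t ∈ Icc 0 B)
    (hX : ∀ t ∈ Icc (0:ℝ) T, X t ≤ ∫ s in t..T, β s * ρ (X s)) :
    ∀ t ∈ Icc (0:ℝ) T, X t = 0 :=
  backward_bihari_osgood_general ρ hρ T β hβint hβnonneg X hXmeas B hXbdd hX
end

section
/- Let ρ : [0,∞) → [0,∞) be an Osgood modulus, let T > 0, C ≥ 0, B ≥ 0, let (ε_m)_{m≥1} be nonnegative reals with ε_m → 0, and for each m let X_m : [0,T] → [0,B] be measurable with X_m(t) ≤ ε_m + C·∫_t^T ρ(X_m(s)) ds for every t ∈ [0,T]. Then sup_{t∈[0,T]} X_m(t) → 0 as m → ∞. -/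
/-!
For `y τ ≤ ε + C ∫₀^τ ρ(y)` with `ε > 0`, the majorant
`H τ = ε + C ∫₀^τ ρ(y)` satisfies `H τ' - H τ ≤ C (τ' - τ) ρ(H τ')`, so the Osgood primitive
`∫_ε^{H τ} dv/ρ(v)` has right slopes at most `C` and is bounded by `C τ`. Reversing time, every
`X m t` with `X m t ≥ δ > η m` forces `∫_{η m}^δ dv/ρ(v) ≤ C T`, where `η m ≥ ε m` is positive
and tends to `0`; since the Osgood integral diverges at `0`, this fails for large `m`, so
`sup X m ≤ δ` eventually. An Osgood modulus enters the general lemmas, which ask for a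
continuous monotone `ρ` on all of `ℝ`, as `u ↦ ρ (max u 0)`.
-/

open MeasureTheory Set Filter

open Topology intervalIntegral

section

variable {ρ : ℝ → ℝ}

theorem nonneg_of_continuous_of_pos (hρc : Continuous ρ) (hρpos : ∀ u, 0 < u → 0 < ρ u)
    {u : ℝ} (hu : 0 ≤ u) : 0 ≤ ρ u := by
  obtain hu | rfl := hu.lt_or_eq
  · exact (hρpos u hu).le
  · exact ge_of_tendsto (hρc.continuousAt.tendsto.mono_left (nhdsWithin_le_nhds (s := Ioi 0)))
      (eventually_nhdsWithin_of_forall fun v hv => (hρpos v hv).le)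

theorem intervalIntegrable_inv_of_pos (hρc : Continuous ρ) (hρpos : ∀ u, 0 < u → 0 < ρ u)
    {a b : ℝ} (ha : 0 < a) (hb : 0 < b) : IntervalIntegrable (fun v => (ρ v)⁻¹) volume a b :=
  (hρc.continuousOn.inv₀ fun v hv =>
    (hρpos v ((lt_min ha hb).trans_le hv.1)).ne').intervalIntegrable

theorem integral_inv_le_sub_div (hρc : Continuous ρ) (hρm : Monotone ρ)
    (hρpos : ∀ u, 0 < u → 0 < ρ u) {u v : ℝ} (hu : 0 < u) (huv : u ≤ v) :
    ∫ w in u..v, (ρ w)⁻¹ ≤ (v - u) / ρ u :=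
  calc ∫ w in u..v, (ρ w)⁻¹ ≤ ∫ _ in u..v, (ρ u)⁻¹ :=
        integral_mono_on huv (intervalIntegrable_inv_of_pos hρc hρpos hu (hu.trans_le huv))
          intervalIntegrable_const fun w hw => inv_anti₀ (hρpos u hu) (hρm hw.1)
    _ = (v - u) / ρ u := by rw [intervalIntegral.integral_const, smul_eq_mul, div_eq_mul_inv]

theorem eventually_slope_integral_inv_lt (hρc : Continuous ρ) (hρm : Monotone ρ)
    (hρpos : ∀ u, 0 < u → 0 < ρ u) {H : ℝ → ℝ} {C L : ℝ} (hHc : ContinuousOn H (Icc 0 L))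
    (hHm : MonotoneOn H (Icc 0 L)) (hH0 : 0 < H 0)
    (hslope : ∀ τ ∈ Icc 0 L, ∀ τ' ∈ Icc τ L, H τ' - H τ ≤ C * (τ' - τ) * ρ (H τ'))
    {x : ℝ} (hx : x ∈ Ico 0 L) {r : ℝ} (hr : C < r) :
    ∀ᶠ z in 𝓝[>] x, slope (fun τ => ∫ v in H 0..H τ, (ρ v)⁻¹) x z < r := by
  have hHpos : ∀ τ ∈ Icc 0 L, 0 < H τ := fun τ hτ =>
    hH0.trans_le (hHm ⟨le_rfl, hτ.1.trans hτ.2⟩ hτ hτ.1)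
  have hx' : x ∈ Icc 0 L := Ico_subset_Icc_self hx
  have hρx : 0 < ρ (H x) := hρpos _ (hHpos x hx')
  have hlim : Tendsto (fun z => C * ρ (H z)) (𝓝[>] x) (𝓝 (C * ρ (H x))) :=
    ((hρc.continuousAt.comp_continuousWithinAt
      ((hHc x hx').mono_of_mem_nhdsWithin (Icc_mem_nhdsGT_of_mem hx))).const_mul C).tendsto
  filter_upwards [hlim.eventually_lt_const (mul_lt_mul_of_pos_right hr hρx),
    Ioc_mem_nhdsGT hx.2] with z hz hzL
  have hz' : z ∈ Icc 0 L := ⟨hx.1.trans hzL.1.le, hzL.2⟩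
  have hxz : 0 < z - x := sub_pos.2 hzL.1
  rw [slope_def_field, div_lt_iff₀ hxz]
  calc (∫ v in H 0..H z, (ρ v)⁻¹) - ∫ v in H 0..H x, (ρ v)⁻¹ = ∫ v in H x..H z, (ρ v)⁻¹ :=
        integral_interval_sub_left (intervalIntegrable_inv_of_pos hρc hρpos hH0 (hHpos z hz'))
          (intervalIntegrable_inv_of_pos hρc hρpos hH0 (hHpos x hx'))
    _ ≤ (H z - H x) / ρ (H x) :=
        integral_inv_le_sub_div hρc hρm hρpos (hHpos x hx') (hHm hx' hz' hzL.1.le)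
    _ ≤ C * (z - x) * ρ (H z) / ρ (H x) := by
        gcongr; exact hslope x hx' z ⟨hzL.1.le, hzL.2⟩
    _ < r * (z - x) := by
        rw [div_lt_iff₀ hρx]; nlinarith [mul_lt_mul_of_pos_left hz hxz]

theorem integral_inv_le_of_slope_le (hρc : Continuous ρ) (hρm : Monotone ρ)
    (hρpos : ∀ u, 0 < u → 0 < ρ u) {H : ℝ → ℝ} {C L : ℝ} (hHc : ContinuousOn H (Icc 0 L))
    (hHm : MonotoneOn H (Icc 0 L)) (hH0 : 0 < H 0)
    (hslope : ∀ τ ∈ Icc 0 L, ∀ τ' ∈ Icc τ L, H τ' - H τ ≤ C * (τ' - τ) * ρ (H τ'))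
    {τ : ℝ} (hτ : τ ∈ Icc 0 L) : ∫ v in H 0..H τ, (ρ v)⁻¹ ≤ C * τ := by
  have hL : L ∈ Icc 0 L := ⟨hτ.1.trans hτ.2, le_rfl⟩
  have hcont : ContinuousOn (fun τ => ∫ v in H 0..H τ, (ρ v)⁻¹) (Icc 0 L) :=
    (continuousOn_primitive_interval' (intervalIntegrable_inv_of_pos hρc hρpos hH0
      (hH0.trans_le (hHm (left_mem_Icc.2 hL.1) hL hL.1))) left_mem_uIcc).comp hHc
      fun σ hσ => Icc_subset_uIcc ⟨hHm (left_mem_Icc.2 hL.1) hσ hσ.1, hHm hσ hL hσ.2⟩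
  refine image_le_of_liminf_slope_right_le_deriv_boundary (B := fun τ => C * τ) (B' := fun _ => C)
    hcont (by simp) (by fun_prop) (fun x _ => ?_)
    (fun x hx r hr =>
      (eventually_slope_integral_inv_lt hρc hρm hρpos hHc hHm hH0 hslope hx hr).frequently) hτ
  simpa using ((hasDerivAt_id x).const_mul C).hasDerivWithinAt (s := Ici x)

theorem bihari_integral_inv_le (hρc : Continuous ρ) (hρm : Monotone ρ)
    (hρpos : ∀ u, 0 < u → 0 < ρ u) {y : ℝ → ℝ} {ε C L : ℝ} (hε : 0 < ε) (hC : 0 ≤ C)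
    (hy0 : ∀ τ ∈ Icc 0 L, 0 ≤ y τ) (hint : IntervalIntegrable (fun s => ρ (y s)) volume 0 L)
    (hy : ∀ τ ∈ Icc 0 L, y τ ≤ ε + C * ∫ s in 0..τ, ρ (y s))
    {τ : ℝ} (hτ : τ ∈ Icc 0 L) (hετ : ε ≤ y τ) : ∫ v in ε..y τ, (ρ v)⁻¹ ≤ C * τ := by
  set H : ℝ → ℝ := fun τ => ε + C * ∫ s in 0..τ, ρ (y s) with hH
  have hint' : ∀ σ ∈ Icc 0 L, IntervalIntegrable (fun s => ρ (y s)) volume 0 σ := fun σ hσ =>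
    hint.mono_set (uIcc_subset_uIcc left_mem_uIcc (Icc_subset_uIcc hσ))
  have hincr : ∀ σ ∈ Icc 0 L, ∀ σ' ∈ Icc σ L, H σ' - H σ = C * ∫ s in σ..σ', ρ (y s) :=
    fun σ hσ σ' hσ' => by
      rw [hH, add_sub_add_left_eq_sub, ← mul_sub,
        integral_interval_sub_left (hint' σ' ⟨hσ.1.trans hσ'.1, hσ'.2⟩) (hint' σ hσ)]
  have hHm : MonotoneOn H (Icc 0 L) := fun σ hσ σ' hσ' hσσ' => by
    refine sub_nonneg.1 ((hincr σ hσ σ' ⟨hσσ', hσ'.2⟩).symm ▸ mul_nonneg hC ?_)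
    exact integral_nonneg hσσ' fun s hs =>
      nonneg_of_continuous_of_pos hρc hρpos (hy0 s ⟨hσ.1.trans hs.1, hs.2.trans hσ'.2⟩)
  have hslope : ∀ σ ∈ Icc 0 L, ∀ σ' ∈ Icc σ L, H σ' - H σ ≤ C * (σ' - σ) * ρ (H σ') := by
    intro σ hσ σ' hσ'
    have hσ'' : σ' ∈ Icc 0 L := ⟨hσ.1.trans hσ'.1, hσ'.2⟩
    have hbound : ∫ s in σ..σ', ρ (y s) ≤ ∫ _ in σ..σ', ρ (H σ') :=
      integral_mono_on hσ'.1 (hint.mono_set (uIcc_subset_uIcc (Icc_subset_uIcc hσ)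
        (Icc_subset_uIcc hσ''))) intervalIntegrable_const fun s hs => by
          have hs' : s ∈ Icc 0 L := ⟨hσ.1.trans hs.1, hs.2.trans hσ'.2⟩
          exact hρm ((hy s hs').trans (hHm hs' hσ'' hs.2))
    rw [intervalIntegral.integral_const, smul_eq_mul] at hbound
    rw [hincr σ hσ σ' hσ', mul_assoc]
    exact mul_le_mul_of_nonneg_left hbound hC
  have hHc : ContinuousOn H (Icc 0 L) :=
    continuousOn_const.add (continuousOn_const.mul
      ((continuousOn_primitive_interval' hint left_mem_uIcc).mono Icc_subset_uIcc))
  have hH0 : H 0 = ε := by simp [hH]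
  calc ∫ v in ε..y τ, (ρ v)⁻¹ ≤ ∫ v in ε..H τ, (ρ v)⁻¹ :=
        integral_mono_interval le_rfl hετ (hy τ hτ)
          (ae_restrict_of_forall_mem measurableSet_Ioc fun v hv =>
            inv_nonneg.2 (hρpos v (hε.trans hv.1)).le)
          (intervalIntegrable_inv_of_pos hρc hρpos hε (hε.trans_le (hετ.trans (hy τ hτ))))
    _ ≤ C * τ := hH0 ▸ integral_inv_le_of_slope_le hρc hρm hρpos hHc hHm (hH0 ▸ hε) hslope hτ

theorem bihari_backward_integral_inv_le (hρc : Continuous ρ) (hρm : Monotone ρ)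
    (hρpos : ∀ u, 0 < u → 0 < ρ u) {x : ℝ → ℝ} {ε C t₀ T : ℝ} (hε : 0 < ε) (hC : 0 ≤ C)
    (ht₀ : t₀ ≤ T) (hx0 : ∀ t ∈ Icc t₀ T, 0 ≤ x t)
    (hint : IntervalIntegrable (fun s => ρ (x s)) volume t₀ T)
    (hx : ∀ t ∈ Icc t₀ T, x t ≤ ε + C * ∫ s in t..T, ρ (x s)) (hεx : ε ≤ x t₀) :
    ∫ v in ε..x t₀, (ρ v)⁻¹ ≤ C * (T - t₀) := by
  have hmem : ∀ τ ∈ Icc 0 (T - t₀), T - τ ∈ Icc t₀ T := fun τ hτ =>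
    ⟨by linarith [hτ.2], by linarith [hτ.1]⟩
  have hint' : IntervalIntegrable (fun s => ρ (x (T - s))) volume 0 (T - t₀) := by
    simpa using (hint.comp_sub_left T).symm
  simpa using bihari_integral_inv_le hρc hρm hρpos (y := fun τ => x (T - τ)) hε hC
    (fun τ hτ => hx0 _ (hmem τ hτ)) hint'
    (fun τ hτ => by simpa [integral_comp_sub_left (fun s => ρ (x s)) T] using hx _ (hmem τ hτ))
    ⟨sub_nonneg.2 ht₀, le_rfl⟩ (by simpa using hεx)

theorem bihari_backward_lt (hρc : Continuous ρ) (hρm : Monotone ρ)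
    (hρpos : ∀ u, 0 < u → 0 < ρ u) {x : ℝ → ℝ} {ε C t₀ T δ : ℝ} (hε : 0 < ε) (hC : 0 ≤ C)
    (ht₀ : t₀ ≤ T) (hx0 : ∀ t ∈ Icc t₀ T, 0 ≤ x t)
    (hint : IntervalIntegrable (fun s => ρ (x s)) volume t₀ T)
    (hx : ∀ t ∈ Icc t₀ T, x t ≤ ε + C * ∫ s in t..T, ρ (x s)) (hεδ : ε ≤ δ)
    (hδ : C * (T - t₀) < ∫ v in ε..δ, (ρ v)⁻¹) : x t₀ < δ := by
  by_contra! hδx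
  refine hδ.not_ge (le_trans ?_ (bihari_backward_integral_inv_le hρc hρm hρpos hε hC ht₀ hx0
    hint hx (hεδ.trans hδx)))
  exact integral_mono_interval le_rfl hεδ hδx
    (ae_restrict_of_forall_mem measurableSet_Ioc fun v hv =>
      inv_nonneg.2 (hρpos v (hε.trans hv.1)).le)
    (intervalIntegrable_inv_of_pos hρc hρpos hε (hε.trans_le (hεδ.trans hδx)))

theorem not_integrableOn_inv_Ioc_zero (hρc : Continuous ρ) (hρpos : ∀ u, 0 < u → 0 < ρ u)
    (hdiv : ¬ IntegrableOn (fun v => (ρ v)⁻¹) (Ioc 0 1)) {δ : ℝ} (hδ : 0 < δ) :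
    ¬ IntegrableOn (fun v => (ρ v)⁻¹) (Ioc 0 δ) := fun hint =>
  hdiv ((hint.union (intervalIntegrable_inv_of_pos hρc hρpos hδ one_pos).1).mono_set
    Ioc_subset_Ioc_union_Ioc)

theorem tendsto_integral_inv_nhdsGT_zero (hρc : Continuous ρ)
    (hρpos : ∀ u, 0 < u → 0 < ρ u) {δ : ℝ} (hδ : 0 < δ)
    (hdiv : ¬ IntegrableOn (fun v => (ρ v)⁻¹) (Ioc 0 δ)) :
    Tendsto (fun a => ∫ v in a..δ, (ρ v)⁻¹) (𝓝[>] 0) atTop := by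
  -- If the integrals stayed below `M` for arbitrarily small `a`, by monotonicity in `a` they
  -- would stay below `M` for all `a`, making `ρ⁻¹` integrable on `(0, δ]`.
  refine tendsto_atTop.2 fun M => not_not.1 fun hM => hdiv ?_
  have hfreq : ∃ᶠ a in 𝓝[>] 0, ∫ v in a..δ, (ρ v)⁻¹ < M := by
    simpa only [not_le] using not_eventually.1 hM
  set a : ℕ → ℝ := fun n => δ / (n + 2)
  have ha : ∀ n, a n ∈ Ioo 0 δ := fun n =>
    ⟨by positivity, div_lt_self hδ (by linarith [n.cast_nonneg (α := ℝ)])⟩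
  refine integrableOn_Ioc_of_intervalIntegral_norm_bounded_left (l := atTop) (I := M)
    (fun n => (intervalIntegrable_inv_of_pos hρc hρpos (ha n).1 hδ).1)
    (tendsto_const_nhds.div_atTop (tendsto_natCast_atTop_atTop.atTop_add tendsto_const_nhds))
    (Eventually.of_forall fun n => ?_)
  obtain ⟨b, hbM, hb⟩ := (hfreq.and_eventually (Ioo_mem_nhdsGT (ha n).1)).exists
  have hinv : ∀ v ∈ Ioc b δ, 0 ≤ (ρ v)⁻¹ := fun v hv => inv_nonneg.2 (hρpos v (hb.1.trans hv.1)).le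
  calc ∫ v in Ioc (a n) δ, ‖(ρ v)⁻¹‖ = ∫ v in a n..δ, (ρ v)⁻¹ := by
        rw [integral_of_le (ha n).2.le]
        exact setIntegral_congr_fun measurableSet_Ioc fun v hv =>
          Real.norm_of_nonneg (hinv v ⟨hb.2.trans hv.1, hv.2⟩)
    _ ≤ ∫ v in b..δ, (ρ v)⁻¹ := integral_mono_interval hb.2.le (ha n).2.le le_rfl
        (ae_restrict_of_forall_mem measurableSet_Ioc hinv)
        (intervalIntegrable_inv_of_pos hρc hρpos hb.1 hδ)
    _ ≤ M := hbM.le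

theorem integrableOn_comp_of_mapsTo {α : Type*} [MeasurableSpace α] {μ : Measure α}
    {x : α → ℝ} {g : ℝ → ℝ} (hg : Continuous g) (hx : Measurable x) {s : Set α} {K : Set ℝ}
    (hs : MeasurableSet s) (hμs : μ s < ⊤) (hK : IsCompact K) (hmaps : MapsTo x s K) :
    IntegrableOn (fun t => g (x t)) s μ := by
  obtain ⟨M, hM⟩ := hK.exists_bound_of_continuousOn hg.continuousOn
  exact IntegrableOn.of_bound hμs (hg.measurable.comp hx).aestronglyMeasurable M
    (ae_restrict_of_forall_mem hs fun t ht => hM _ (hmaps ht))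

theorem integral_comp_max_zero {f y : ℝ → ℝ} {a b : ℝ} (hy : ∀ s ∈ uIcc a b, 0 ≤ y s) :
    ∫ s in a..b, f (max (y s) 0) = ∫ s in a..b, f (y s) :=
  integral_congr fun s hs => by simp only [max_eq_left (hy s hs)]

theorem exists_ge_tendsto_nhdsGT_zero {ε : ℕ → ℝ} (hε : Tendsto ε atTop (𝓝 0)) :
    ∃ η : ℕ → ℝ, (∀ m, ε m ≤ η m) ∧ Tendsto η atTop (𝓝[>] 0) :=
  ⟨fun m => max (ε m) (1 / ((m : ℝ) + 1)), fun m => le_max_left _ _,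
    tendsto_nhdsWithin_iff.2
      ⟨by simpa [one_div] using hε.max tendsto_one_div_add_atTop_nhds_zero_nat,
      Eventually.of_forall fun _ => mem_Ioi.2 (lt_max_of_lt_right Nat.one_div_pos_of_nat)⟩⟩

namespace IsOsgoodModulus

theorem continuous_comp_max (hρ : IsOsgoodModulus ρ) : Continuous fun u => ρ (max u 0) :=
  hρ.1.comp_continuous (continuous_id.max continuous_const) fun u => le_max_right u 0

theorem monotone_comp_max (hρ : IsOsgoodModulus ρ) : Monotone fun u => ρ (max u 0) :=
  fun _ _ huv => hρ.2.1 (mem_Ici.2 (le_max_right _ 0)) (mem_Ici.2 (le_max_right _ 0))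
    (max_le_max_right 0 huv)

theorem comp_max_pos (hρ : IsOsgoodModulus ρ) (u : ℝ) (hu : 0 < u) : 0 < ρ (max u 0) := by
  rw [max_eq_left hu.le]
  exact hρ.2.2.2.2.1 u hu

theorem not_integrableOn_inv_comp_max (hρ : IsOsgoodModulus ρ) :
    ¬ IntegrableOn (fun v => (ρ (max v 0))⁻¹) (Ioc 0 1) := fun hint => by
  have := hint.lintegral_lt_top
  rw [setLIntegral_congr_fun measurableSet_Ioc fun v hv => by rw [max_eq_left hv.1.le, ← one_div],
    hρ.2.2.2.2.2] at this
  exact lt_irrefl _ this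

theorem tendsto_integral_inv_nhdsGT_zero (hρ : IsOsgoodModulus ρ) {δ : ℝ} (hδ : 0 < δ) :
    Tendsto (fun a => ∫ v in a..δ, (ρ v)⁻¹) (𝓝[>] 0) atTop := by
  refine (_root_.tendsto_integral_inv_nhdsGT_zero hρ.continuous_comp_max hρ.comp_max_pos hδ
    (not_integrableOn_inv_Ioc_zero hρ.continuous_comp_max hρ.comp_max_pos
      hρ.not_integrableOn_inv_comp_max hδ)).congr' ?_
  filter_upwards [self_mem_nhdsWithin] with a (ha : 0 < a)
  exact integral_comp_max_zero (f := fun u => (ρ u)⁻¹) (y := id) fun v hv =>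
    (lt_min ha hδ).le.trans hv.1

theorem bihari_lt (hρ : IsOsgoodModulus ρ) {x : ℝ → ℝ} {ε C T B δ : ℝ} (hε : 0 < ε)
    (hC : 0 ≤ C) (hx : Measurable x) (hxB : ∀ t ∈ Icc 0 T, x t ∈ Icc 0 B)
    (hxε : ∀ t ∈ Icc 0 T, x t ≤ ε + C * ∫ s in t..T, ρ (x s)) (hεδ : ε ≤ δ)
    (hδ : C * T < ∫ v in ε..δ, (ρ v)⁻¹) {t : ℝ} (ht : t ∈ Icc 0 T) : x t < δ := by
  have hsub : Icc t T ⊆ Icc 0 T := Icc_subset_Icc_left ht.1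
  have hint : IntegrableOn (fun s => ρ (max (x s) 0)) (Icc 0 T) :=
    integrableOn_comp_of_mapsTo hρ.continuous_comp_max hx measurableSet_Icc measure_Icc_lt_top
      isCompact_Icc hxB
  refine bihari_backward_lt hρ.continuous_comp_max hρ.monotone_comp_max hρ.comp_max_pos hε hC
    ht.2 (fun s hs => (hxB s (hsub hs)).1)
    ((hint.mono_set (uIcc_of_le ht.2 ▸ hsub)).intervalIntegrable) (fun s hs => ?_) hεδ ?_
  · rw [integral_comp_max_zero fun u hu =>
      (hxB u (hsub ((uIcc_of_le hs.2 ▸ Icc_subset_Icc_left hs.1) hu))).1]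
    exact hxε s (hsub hs)
  · refine (lt_of_le_of_lt (mul_le_mul_of_nonneg_left (by linarith [ht.1]) hC) hδ).trans_eq ?_
    exact (integral_comp_max_zero (f := fun u => (ρ u)⁻¹) (y := id) fun v hv =>
      (le_min hε.le (hε.le.trans hεδ)).trans hv.1).symm

end IsOsgoodModulus

end

theorem bihari_sequence_sup_tendsto_zero_general
    (ρ : ℝ → ℝ) (hρ : IsOsgoodModulus ρ)
    (T C B : ℝ) (hC : 0 ≤ C)
    (ε : ℕ → ℝ)
    (hε : Tendsto ε atTop (nhds 0))
    (X : ℕ → ℝ → ℝ) (hXmeas : ∀ m, Measurable (X m))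
    (hXbdd : ∀ m, ∀ t ∈ Icc (0:ℝ) T, X m t ∈ Icc 0 B)
    (hX : ∀ m, ∀ t ∈ Icc (0:ℝ) T, X m t ≤ ε m + C * ∫ s in t..T, ρ (X m s)) :
    Tendsto (fun m => ⨆ t : Icc (0:ℝ) T, X m t) atTop (nhds 0) := by
  -- `ε m` may vanish, while the Bihari estimate needs a positive constant
  obtain ⟨η, hεη, hη⟩ := exists_ge_tendsto_nhdsGT_zero hε
  refine (nhds_basis_Icc_pos 0).tendsto_right_iff.2 fun δ hδ => ?_
  have hdiv := (hρ.tendsto_integral_inv_nhdsGT_zero hδ).eventually_gt_atTop (C * T)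
  filter_upwards [hη.eventually hdiv, hη.eventually (Ioo_mem_nhdsGT hδ)] with m hCT hηδ
  have hXδ : ∀ t : Icc 0 T, X m t < δ := fun t =>
    hρ.bihari_lt hηδ.1 hC (hXmeas m) (hXbdd m)
      (fun s hs => (hX m s hs).trans (by gcongr; exact hεη m)) hηδ.2.le hCT t.2
  exact ⟨by linarith [Real.iSup_nonneg fun t : Icc 0 T => (hXbdd m t t.2).1],
    by linarith [Real.iSup_le (fun t => (hXδ t).le) hδ.le]⟩

/-- Uniform convergence to zero for a sequence of functions satisfying
backward Bihari-type inequalities with vanishing initial errors. -/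
theorem bihari_sequence_sup_tendsto_zero
    (ρ : ℝ → ℝ) (hρ : IsOsgoodModulus ρ)
    (T C B : ℝ) (hT : 0 < T) (hC : 0 ≤ C) (hB : 0 ≤ B)
    (ε : ℕ → ℝ) (hεnonneg : ∀ m, 0 ≤ ε m)
    (hε : Tendsto ε atTop (nhds 0))
    (X : ℕ → ℝ → ℝ) (hXmeas : ∀ m, Measurable (X m))
    (hXbdd : ∀ m, ∀ t ∈ Icc (0:ℝ) T, X m t ∈ Icc 0 B)
    (hX : ∀ m, ∀ t ∈ Icc (0:ℝ) T, X m t ≤ ε m + C * ∫ s in t..T, ρ (X m s)) :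
    Tendsto (fun m => ⨆ t : Icc (0:ℝ) T, X m t) atTop (nhds 0) :=
  bihari_sequence_sup_tendsto_zero_general ρ hρ T C B hC ε hε X hXmeas hXbdd hX
end
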